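/- For every integer m ≥ 1, every real x ≥ 0 and every real t > 0, Σ_{n=0}^∞ (−1)^n t^n L_n(x)/(n + m)! = exp(x) · ∫_0^∞ exp(−u) · (tu)^{−m/2} · J_m(2√(tu)) · J_0(2√(xu)) du, where the series converges and the integral converges. -/

import Mathlib

open MeasureTheory Real

/-- Bessel function of the first kind of integer order `m`. -/
noncomputable def besselJ (m : ℕ) (x : ℝ) : ℝ :=
  ∑' k : ℕ, (-1 : ℝ) ^ k * (x / 2) ^ (m + 2 * k) / (Nat.factorial k * Nat.factorial (m + k))

/-- Laguerre polynomial of degree `n`. -/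
noncomputable def laguerre (n : ℕ) (x : ℝ) : ℝ :=
  ∑ k ∈ Finset.range (n + 1),
    (-1 : ℝ) ^ k * Nat.factorial n * x ^ k /
      ((Nat.factorial k) ^ 2 * Nat.factorial (n - k))

/-!
For `u > 0` write `(tu)^{-m/2} J_m(2√(tu)) = Σ_k c_k u^k` and `J_0(2√(xu)) = Σ_j d_j u^j`, with
`c_k = (-t)^k / (k! (m+k)!)` and `d_j = (-x)^j / (j!)²`. Since `∫₀^∞ e^{-u} u^n du = n!` and
`Σ |c_k d_j| (k+j)!` converges, the integral of `e^{-u} Σ_{k,j} c_k d_j u^{k+j}` may be taken term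
by term and equals `Σ_{k,j} c_k d_j (k+j)!`. Summing over `j` first leaves Kummer's transformation
`e^x Σ_j (-x)^j (k+j)!/(j!)² = k! L_k(x)`; comparing coefficients of its Cauchy product with the
exponential series, this reduces to `Σ_j (-1)^j C(p,j) C(k+j,k) = (-1)^p C(k,p)`, which is
Chu–Vandermonde with the negative upper index `-(k+1)`.
-/

open Finset Nat Set Filter

theorem sum_range_neg_one_pow_mul_choose_mul_add_choose (k p : ℕ) :
    ∑ j ∈ range (p + 1), (-1 : ℤ) ^ j * p.choose j * (k + j).choose k =
      (-1) ^ p * k.choose p := by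
  -- Upper negation `Ring.choose (-(k + 1)) j = (-1) ^ j * (k + j).choose j` turns the sum into
  -- Chu–Vandermonde for `Ring.choose (-(k + 1) + p) p`.
  have h := Ring.add_choose_eq p (Commute.all (-(k + 1 : ℤ)) p)
  rw [Finset.Nat.sum_antidiagonal_eq_sum_range_succ
      (fun i j ↦ Ring.choose (-(k + 1 : ℤ)) i * Ring.choose (p : ℤ) j),
    show -(k + 1 : ℤ) + p = -(k + 1 - p : ℤ) by ring] at h
  simp only [Ring.choose_neg, Ring.choose_natCast, Units.smul_def, Int.coe_negOnePow_natCast,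
    smul_eq_mul] at h
  rw [show (k : ℤ) + 1 - p + p - 1 = k by ring, Ring.choose_natCast] at h
  rw [h]
  refine sum_congr rfl fun j hj ↦ ?_
  rw [Nat.choose_symm (by grind), show (k : ℤ) + 1 + j - 1 = ((k + j : ℕ) : ℤ) by push_cast; ring,
    Ring.choose_natCast, Nat.choose_symm_add]
  ring

theorem laguerre_eq_sum_choose (n : ℕ) (x : ℝ) :
    laguerre n x = ∑ k ∈ range (n + 1), (-1) ^ k * n.choose k * (x ^ k / k !) := by
  refine sum_congr rfl fun k hk ↦ ?_
  rw [Nat.cast_choose ℝ (by grind)]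
  field_simp

theorem factorial_add_le_two_pow_mul (k j : ℕ) : (k + j)! ≤ 2 ^ (k + j) * (k ! * j !) := by
  rw [← Nat.add_choose_mul_factorial_mul_factorial, mul_assoc]
  exact Nat.mul_le_mul_right _ (Nat.choose_le_two_pow _ _)

theorem summable_norm_neg_pow_div_factorial_sq_mul_factorial_add (k : ℕ) (x : ℝ) :
    Summable fun j : ℕ ↦ ‖(-x) ^ j / (j ! * j !) * (k + j)!‖ := by
  refine .of_nonneg_of_le (fun _ ↦ norm_nonneg _) (fun j ↦ ?_)
    ((summable_pow_div_factorial (2 * |x|)).mul_left (2 ^ k * k ! : ℝ))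
  have := j.factorial_pos
  simp only [norm_mul, norm_div, norm_pow, norm_neg, Real.norm_eq_abs, Nat.abs_cast]
  calc |x| ^ j / (j ! * j !) * ((k + j)! : ℝ)
      ≤ |x| ^ j / (j ! * j !) * (2 ^ (k + j) * (k ! * j !)) := by
        gcongr; exact_mod_cast factorial_add_le_two_pow_mul k j
    _ = 2 ^ k * k ! * ((2 * |x|) ^ j / j !) := by
        field_simp; ring

theorem exp_cauchy_coeff_eq_laguerre_coeff (k p : ℕ) (x : ℝ) :
    ∑ j ∈ range (p + 1), (-x) ^ j / (j ! * j !) * (k + j)! * (x ^ (p - j) / (p - j)!) =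
      k ! * ((-1) ^ p * k.choose p * (x ^ p / p !)) := by
  have hterm : ∀ j ∈ range (p + 1),
      (-x) ^ j / (j ! * j !) * (k + j)! * (x ^ (p - j) / (p - j)!) =
        k ! * x ^ p / p ! * ((-1) ^ j * p.choose j * (k + j).choose k) := by
    intro j hj
    have hjp : j ≤ p := by grind
    have e1 : (p.choose j * j ! * (p - j)! : ℝ) = p ! := by
      exact_mod_cast Nat.choose_mul_factorial_mul_factorial hjp
    have e2 : ((k + j).choose k * k ! * j ! : ℝ) = (k + j)! := by
      rw [Nat.choose_symm_add]; exact_mod_cast Nat.add_choose_mul_factorial_mul_factorial k j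
    have := Nat.choose_pos hjp
    rw [← e1, ← e2, neg_pow, ← pow_sub_mul_pow x hjp]
    field_simp
  rw [sum_congr rfl hterm, ← mul_sum]
  have := congrArg (Int.cast : ℤ → ℝ) (sum_range_neg_one_pow_mul_choose_mul_add_choose k p)
  push_cast at this
  rw [this]
  ring

theorem exp_mul_tsum_neg_pow_div_factorial_sq_mul_factorial_add (k : ℕ) (x : ℝ) :
    exp x * ∑' j, (-x) ^ j / (j ! * j !) * (k + j)! = k ! * laguerre k x := by
  have hexp : Summable fun i ↦ ‖x ^ i / (i ! : ℝ)‖ := by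
    simpa only [norm_div, norm_pow, Real.norm_eq_abs, Nat.abs_cast] using
      summable_pow_div_factorial |x|
  rw [Real.exp_eq_exp_ℝ, NormedSpace.exp_eq_tsum_div, mul_comm,
    tsum_mul_tsum_eq_tsum_sum_range_of_summable_norm
      (summable_norm_neg_pow_div_factorial_sq_mul_factorial_add k x) hexp]
  simp_rw [exp_cauchy_coeff_eq_laguerre_coeff]
  rw [tsum_eq_sum (s := range (k + 1)) fun p hp ↦ by
      rw [Nat.choose_eq_zero_of_lt (by simpa using hp)]; simp,
    laguerre_eq_sum_choose, mul_sum]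

theorem integrable_tsum_of_summable_integral_norm {α ι E : Type*} [MeasurableSpace α]
    {μ : Measure α} [Countable ι] [NormedAddCommGroup E] {F : ι → α → E}
    (hF_int : ∀ i, Integrable (F i) μ) (hF_sum : Summable fun i ↦ ∫ a, ‖F i a‖ ∂μ)
    (hF_ae : ∀ᵐ a ∂μ, Summable fun i ↦ F i a) :
    Integrable (fun a ↦ ∑' i, F i a) μ := by
  refine ⟨aestronglyMeasurable_of_tendsto_ae atTop
    (fun s ↦ Finset.aestronglyMeasurable_fun_sum s fun i _ ↦ (hF_int i).1)
    (hF_ae.mono fun a ha ↦ ha.hasSum), ?_⟩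
  calc ∫⁻ a, ‖∑' i, F i a‖ₑ ∂μ
      ≤ ∫⁻ a, ∑' i, ‖F i a‖ₑ ∂μ := lintegral_mono fun a ↦ enorm_tsum_le_tsum_enorm
    _ = ∑' i, ENNReal.ofReal (∫ a, ‖F i a‖ ∂μ) := by
        rw [lintegral_tsum fun i ↦ (hF_int i).1.enorm]
        exact tsum_congr fun i ↦ (ofReal_integral_norm_eq_lintegral_enorm (hF_int i)).symm
    _ = ENNReal.ofReal (∑' i, ∫ a, ‖F i a‖ ∂μ) :=
        (ENNReal.ofReal_tsum_of_nonneg (fun i ↦ integral_nonneg fun a ↦ norm_nonneg _)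
          hF_sum).symm
    _ < ⊤ := ENNReal.ofReal_lt_top

theorem integrableOn_exp_neg_mul_pow_Ioi (n : ℕ) :
    IntegrableOn (fun u : ℝ ↦ exp (-u) * u ^ n) (Ioi 0) := by
  simpa using Real.GammaIntegral_convergent (s := n + 1) (by positivity)

theorem integral_exp_neg_mul_pow_Ioi (n : ℕ) :
    ∫ u in Ioi (0 : ℝ), exp (-u) * u ^ n = n ! := by
  simpa [Real.Gamma_nat_eq_factorial] using
    (Real.Gamma_eq_integral (s := n + 1) (by positivity)).symm

theorem exp_neg_mul_pow_le_factorial {u : ℝ} (hu : 0 ≤ u) (n : ℕ) : exp (-u) * u ^ n ≤ n ! := by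
  have := pow_div_factorial_le_exp u hu n
  rw [div_le_iff₀ (by positivity)] at this
  rw [exp_neg, inv_mul_le_iff₀ (exp_pos u)]
  linarith

theorem integral_exp_neg_mul_const_mul_pow_Ioi (c : ℝ) (n : ℕ) :
    ∫ u in Ioi (0 : ℝ), exp (-u) * (c * u ^ n) = c * n ! := by
  simp_rw [mul_left_comm _ c]
  rw [integral_const_mul, integral_exp_neg_mul_pow_Ioi]

theorem integral_norm_exp_neg_mul_const_mul_pow_Ioi (c : ℝ) (n : ℕ) :
    ∫ u in Ioi (0 : ℝ), ‖exp (-u) * (c * u ^ n)‖ = |c| * n ! := by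
  rw [← integral_exp_neg_mul_const_mul_pow_Ioi]
  refine setIntegral_congr_fun measurableSet_Ioi fun u (hu : 0 < u) ↦ ?_
  rw [Real.norm_eq_abs, abs_mul, abs_mul, abs_pow, abs_of_pos hu, abs_of_pos (exp_pos _)]

section GammaMoments

variable {ι : Type*} {a : ι → ℝ} {e : ι → ℕ}

theorem summable_exp_neg_mul_const_mul_pow (h : Summable fun i ↦ |a i| * (e i)!) {u : ℝ}
    (hu : 0 ≤ u) : Summable fun i ↦ exp (-u) * (a i * u ^ e i) := by
  refine .of_norm_bounded h fun i ↦ ?_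
  rw [Real.norm_eq_abs, abs_mul, abs_mul, abs_pow, abs_of_nonneg hu, abs_of_pos (exp_pos _),
    mul_left_comm]
  exact mul_le_mul_of_nonneg_left (exp_neg_mul_pow_le_factorial hu _) (abs_nonneg _)

variable [Countable ι]

theorem integrableOn_exp_neg_mul_tsum_mul_pow_Ioi_and_hasSum_integral
    (h : Summable fun i ↦ |a i| * (e i)!) :
    IntegrableOn (fun u ↦ exp (-u) * ∑' i, a i * u ^ e i) (Ioi 0) ∧
      HasSum (fun i ↦ a i * (e i)!) (∫ u in Ioi (0 : ℝ), exp (-u) * ∑' i, a i * u ^ e i) := by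
  have hF_int (i : ι) : IntegrableOn (fun u ↦ exp (-u) * (a i * u ^ e i)) (Ioi 0) := by
    simpa only [IntegrableOn, mul_left_comm _ (a i)] using
      (integrableOn_exp_neg_mul_pow_Ioi (e i)).const_mul (a i)
  have hF_sum := h.congr fun i ↦ (integral_norm_exp_neg_mul_const_mul_pow_Ioi (a i) (e i)).symm
  simp_rw [← tsum_mul_left]
  refine ⟨integrable_tsum_of_summable_integral_norm hF_int hF_sum ?_, ?_⟩
  · exact (ae_restrict_mem measurableSet_Ioi).mono fun u (hu : 0 < u) ↦
      summable_exp_neg_mul_const_mul_pow h hu.le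
  · simpa only [integral_exp_neg_mul_const_mul_pow_Ioi] using
      hasSum_integral_of_summable_integral_norm hF_int hF_sum

end GammaMoments

theorem besselJ_two_mul_sqrt (m : ℕ) {y : ℝ} (hy : 0 ≤ y) :
    besselJ m (2 * √y) = √y ^ m * ∑' k, (-y) ^ k / (k ! * (m + k)!) := by
  rw [besselJ, ← tsum_mul_left]
  refine tsum_congr fun k ↦ ?_
  rw [mul_div_cancel_left₀ _ two_ne_zero, pow_add, pow_mul, sq_sqrt hy, neg_pow]
  ring

theorem summable_norm_neg_pow_div_factorial_mul_factorial_add (m : ℕ) (y : ℝ) :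
    Summable fun k : ℕ ↦ ‖(-y) ^ k / (k ! * (m + k)!)‖ := by
  refine .of_nonneg_of_le (fun _ ↦ norm_nonneg _) (fun k ↦ ?_) (summable_pow_div_factorial |y|)
  have := k.factorial_pos
  have : (1 : ℝ) ≤ (m + k)! := Nat.one_le_cast.mpr (m + k).factorial_pos
  simp only [norm_div, norm_mul, norm_pow, norm_neg, Real.norm_eq_abs, Nat.abs_cast]
  gcongr
  exact le_mul_of_one_le_right (by positivity) this

noncomputable def besselProductCoeff (m : ℕ) (t x : ℝ) (q : ℕ × ℕ) : ℝ :=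
  (-t) ^ q.1 / (q.1 ! * (m + q.1)!) * ((-x) ^ q.2 / (q.2 ! * q.2 !))

theorem summable_abs_besselProductCoeff_mul_factorial (m : ℕ) (t x : ℝ) :
    Summable fun q ↦ |besselProductCoeff m t x q| * (q.1 + q.2)! := by
  refine .of_nonneg_of_le (fun _ ↦ by positivity) (fun ⟨k, j⟩ ↦ ?_)
    ((summable_pow_div_factorial (2 * |t|)).mul_of_nonneg (summable_pow_div_factorial (2 * |x|))
      (fun _ ↦ by positivity) (fun _ ↦ by positivity))
  have hk := k.factorial_pos
  have hj := j.factorial_pos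
  have hmk : (k ! : ℝ) ≤ (m + k)! := by exact_mod_cast Nat.factorial_le (by omega)
  simp only [besselProductCoeff, abs_mul, abs_div, abs_pow, abs_neg, Nat.abs_cast]
  calc |t| ^ k / (k ! * (m + k)!) * (|x| ^ j / (j ! * j !)) * ((k + j)! : ℝ)
      ≤ |t| ^ k / (k ! * k !) * (|x| ^ j / (j ! * j !)) * (2 ^ (k + j) * (k ! * j !)) := by
        gcongr; exact_mod_cast factorial_add_le_two_pow_mul k j
    _ = (2 * |t|) ^ k / k ! * ((2 * |x|) ^ j / j !) := by
        field_simp; ring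

theorem rpow_neg_mul_besselJ_mul_besselJ_eq_tsum (m : ℕ) {t x u : ℝ} (ht : 0 < t) (hx : 0 ≤ x)
    (hu : 0 < u) :
    (t * u) ^ (-(m : ℝ) / 2) * besselJ m (2 * √(t * u)) * besselJ 0 (2 * √(x * u)) =
      ∑' q, besselProductCoeff m t x q * u ^ (q.1 + q.2) := by
  have htu : 0 < t * u := mul_pos ht hu
  have hnorm : (t * u) ^ (-(m : ℝ) / 2) * √(t * u) ^ m = 1 := by
    rw [sqrt_eq_rpow, ← rpow_natCast, ← rpow_mul htu.le, ← rpow_add htu,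
      show -(m : ℝ) / 2 + 1 / 2 * m = 0 by ring, rpow_zero]
  rw [besselJ_two_mul_sqrt m htu.le, besselJ_two_mul_sqrt 0 (mul_nonneg hx hu.le), pow_zero,
    one_mul, ← mul_assoc, hnorm, one_mul,
    tsum_mul_tsum_of_summable_norm (summable_norm_neg_pow_div_factorial_mul_factorial_add m _)
      (summable_norm_neg_pow_div_factorial_mul_factorial_add 0 _)]
  refine tsum_congr fun q ↦ ?_
  simp only [besselProductCoeff, zero_add]
  ring

theorem hasSum_laguerre_series (m : ℕ) (t x : ℝ) :
    HasSum (fun n ↦ (-1) ^ n * t ^ n * laguerre n x / (n + m)!)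
      (exp x * ∑' q, besselProductCoeff m t x q * (q.1 + q.2)!) := by
  have hG : Summable fun q ↦ besselProductCoeff m t x q * (q.1 + q.2)! :=
    .of_norm_bounded (summable_abs_besselProductCoeff_mul_factorial m t x) fun q ↦ by
      rw [norm_mul, Real.norm_eq_abs, Real.norm_natCast]
  have hfiber (k : ℕ) : exp x * ∑' j, besselProductCoeff m t x (k, j) * (k + j)! =
      (-1) ^ k * t ^ k * laguerre k x / (k + m)! := by
    simp only [besselProductCoeff, mul_assoc, tsum_mul_left]
    rw [mul_left_comm, exp_mul_tsum_neg_pow_div_factorial_sq_mul_factorial_add, add_comm k m,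
      neg_pow]
    have := k.factorial_pos
    field_simp
  rw [hG.tsum_prod' hG.prod_factor]
  simpa only [hfiber] using hG.prod.hasSum.mul_left (exp x)

theorem laguerre_series_eq_integral_besselJ_general (m : ℕ) (x t : ℝ)
    (hx : 0 ≤ x) (ht : 0 < t) :
    Summable (fun n : ℕ => (-1 : ℝ) ^ n * t ^ n * laguerre n x / Nat.factorial (n + m)) ∧
    IntegrableOn
      (fun u : ℝ => Real.exp (-u) * (t * u) ^ (-(m : ℝ) / 2) *
        besselJ m (2 * Real.sqrt (t * u)) * besselJ 0 (2 * Real.sqrt (x * u))) (Set.Ioi 0) ∧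
    (∑' n : ℕ, (-1 : ℝ) ^ n * t ^ n * laguerre n x / Nat.factorial (n + m)) =
      Real.exp x *
        ∫ u in Set.Ioi (0 : ℝ),
          Real.exp (-u) * (t * u) ^ (-(m : ℝ) / 2) *
            besselJ m (2 * Real.sqrt (t * u)) * besselJ 0 (2 * Real.sqrt (x * u)) := by
  obtain ⟨hint, hval⟩ := integrableOn_exp_neg_mul_tsum_mul_pow_Ioi_and_hasSum_integral
    (summable_abs_besselProductCoeff_mul_factorial m t x)
  have hpt : EqOn (fun u ↦ exp (-u) * (t * u) ^ (-(m : ℝ) / 2) *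
        besselJ m (2 * √(t * u)) * besselJ 0 (2 * √(x * u)))
      (fun u ↦ exp (-u) * ∑' q, besselProductCoeff m t x q * u ^ (q.1 + q.2)) (Ioi 0) :=
    fun u hu ↦ by
      simp only [mul_assoc, ← rpow_neg_mul_besselJ_mul_besselJ_eq_tsum m ht hx hu]
  have hseries := hasSum_laguerre_series m t x
  refine ⟨hseries.summable, hint.congr_fun hpt.symm measurableSet_Ioi, ?_⟩
  rw [hseries.tsum_eq, setIntegral_congr_fun measurableSet_Ioi hpt, hval.tsum_eq]

/-- Integral representation of `Σ_{n≥0} (−1)ⁿ tⁿ Lₙ(x)/(n+m)!` for `m ≥ 1`,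
`x ≥ 0`, `t > 0`; the series and the integral both converge. -/
theorem laguerre_series_eq_integral_besselJ (m : ℕ) (x t : ℝ)
    (hm : 1 ≤ m) (hx : 0 ≤ x) (ht : 0 < t) :
    Summable (fun n : ℕ => (-1 : ℝ) ^ n * t ^ n * laguerre n x / Nat.factorial (n + m)) ∧
    IntegrableOn
      (fun u : ℝ => Real.exp (-u) * (t * u) ^ (-(m : ℝ) / 2) *
        besselJ m (2 * Real.sqrt (t * u)) * besselJ 0 (2 * Real.sqrt (x * u))) (Set.Ioi 0) ∧
    (∑' n : ℕ, (-1 : ℝ) ^ n * t ^ n * laguerre n x / Nat.factorial (n + m)) =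
      Real.exp x *
        ∫ u in Set.Ioi (0 : ℝ),
          Real.exp (-u) * (t * u) ^ (-(m : ℝ) / 2) *
            besselJ m (2 * Real.sqrt (t * u)) * besselJ 0 (2 * Real.sqrt (x * u)) :=
  laguerre_series_eq_integral_besselJ_general m x t hx ht
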